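/- arXiv:0810.3940 — 4 statements merged into one kernel-verified Lean document; each statement's English description precedes it below -/
import Mathlib

section
/- Let V be a finite-dimensional complex vector space, d > 2, and T a symmetric tensor in Sym^d(V). Suppose D = {a_i} is a decomposition of T into rank-one tensors a_i = a_i^{(1)} ⊗ ... ⊗ a_i^{(d)} (so T = Σ_i a_i) such that for every subset I ⊂ {1,...,d} with |I| = d−2, the set of projected tensors {⊗_{j∈I} a_i^{(j)}}_i is linearly independent. Then the decomposition is symmetric: for each i, all the vectors a_i^{(1)}, ..., a_i^{(d)} are proportional (equal up to scalar), i.e. each a_i is a symmetric rank-one tensor. -/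
/-- STATEMENT 0 (Gross's lemma, second assertion), in coordinates:
tensors on `V = ℂ^n` of order `d` are functions `(Fin d → Fin n) → ℂ`. -/
theorem gross_symmetric_decomposition {n d m : ℕ} (hd : 2 < d)
    (T : (Fin d → Fin n) → ℂ)
    (hsym : ∀ σ : Equiv.Perm (Fin d), ∀ f : Fin d → Fin n, T (f ∘ σ) = T f)
    (a : Fin m → Fin d → (Fin n → ℂ))
    (hdec : T = fun f => ∑ i, ∏ j, a i j (f j))
    (hind : ∀ I : Finset (Fin d), I.card = d - 2 →
      LinearIndependent ℂ
        (fun i : Fin m => fun f : {j // j ∈ I} → Fin n =>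
          ∏ j : {j // j ∈ I}, a i (j : Fin d) (f j))) :
    ∀ i : Fin m, ∃ (v : Fin n → ℂ) (c : Fin d → ℂ), ∀ j, a i j = c j • v := by
  subst hdec
  intro i
  -- Key pairwise symmetry relation
  have key : ∀ p q : Fin d, p ≠ q → ∀ x y : Fin n,
      a i p x * a i q y = a i q x * a i p y := by
    intro p q hpq x y
    have hcard : ({p, q}ᶜ : Finset (Fin d)).card = d - 2 := by
      rw [Finset.card_compl, Finset.card_pair hpq, Fintype.card_fin]
    have hli := hind _ hcard
    rw [Fintype.linearIndependent_iff] at hli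
    have h0 := hli (fun i' => a i' p x * a i' q y - a i' q x * a i' p y) ?_ i
    · exact sub_eq_zero.mp h0
    · funext g
      set σ : Equiv.Perm (Fin d) := Equiv.swap p q with hσ
      set f : Fin d → Fin n := fun j =>
        if h : j ∈ ({p, q}ᶜ : Finset (Fin d)) then g ⟨j, h⟩ else if j = p then x else y
        with hf
      have hfp : f p = x := by simp [hf]
      have hfq : f q = y := by
        simp [hf, hpq.symm]
      have hfI : ∀ j (h : j ∈ ({p, q}ᶜ : Finset (Fin d))), f j = g ⟨j, h⟩ := by
        intro j h; exact dif_pos h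
      have hs := hsym σ f
      simp only at hs
      have hprod : ∀ (i' : Fin m) (u : Fin d → Fin n),
          (∏ j, a i' j (u j)) =
            (a i' p (u p) * a i' q (u q)) * ∏ j ∈ ({p,q}ᶜ : Finset (Fin d)), a i' j (u j) := by
        intro i' u
        rw [← Finset.prod_mul_prod_compl ({p, q} : Finset (Fin d)), Finset.prod_pair hpq]
      have hB : ∀ i' : Fin m,
          (∏ j : {jj // jj ∈ ({p,q}ᶜ : Finset (Fin d))}, a i' (j : Fin d) (g j)) =
            ∏ j ∈ ({p,q}ᶜ : Finset (Fin d)), a i' j (f j) := by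
        intro i'
        rw [← Finset.prod_coe_sort (({p,q}ᶜ : Finset (Fin d))) (fun j => a i' j (f j))]
        refine Finset.prod_congr rfl fun j _ => ?_
        rw [hfI j j.2]
      have hcompseq : ∀ i' : Fin m,
          (∏ j ∈ ({p,q}ᶜ : Finset (Fin d)), a i' j (f (σ j))) =
            ∏ j ∈ ({p,q}ᶜ : Finset (Fin d)), a i' j (f j) := by
        intro i'
        refine Finset.prod_congr rfl fun j hj => ?_
        have hj' : j ≠ p ∧ j ≠ q := by
          simpa [Finset.mem_compl, Finset.mem_insert] using hj
        rw [hσ, Equiv.swap_apply_of_ne_of_ne hj'.1 hj'.2]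
      simp only [Finset.sum_apply, Pi.smul_apply, smul_eq_mul, Pi.zero_apply]
      have hterm : ∀ i' : Fin m,
          (a i' p x * a i' q y - a i' q x * a i' p y) *
              (∏ j : {jj // jj ∈ ({p,q}ᶜ : Finset (Fin d))}, a i' (j : Fin d) (g j)) =
            (∏ j, a i' j (f j)) - (∏ j, a i' j (f (σ j))) := by
        intro i'
        rw [hB, hprod i' f, hprod i' (fun j => f (σ j)), hcompseq]
        have h1 : σ p = q := Equiv.swap_apply_left p q
        have h2 : σ q = p := Equiv.swap_apply_right p q
        rw [h1, h2, hfp, hfq]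
        ring
      rw [Finset.sum_congr rfl fun i' _ => hterm i', Finset.sum_sub_distrib]
      have hs' : (∑ i', ∏ j, a i' j (f (σ j))) = ∑ i', ∏ j, a i' j (f j) := by
        exact hs
      rw [hs', sub_self]
  -- some distinguished indices
  have h0d : (0 : ℕ) < d := by omega
  set j0 : Fin d := ⟨0, by omega⟩ with hj0
  set p1 : Fin d := ⟨1, by omega⟩ with hp1
  set p2 : Fin d := ⟨2, by omega⟩ with hp2
  have hne12 : p1 ≠ p2 := by simp [hp1, hp2, Fin.ext_iff]
  -- a i j0 ≠ 0
  have hcard : ({p1, p2}ᶜ : Finset (Fin d)).card = d - 2 := by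
    rw [Finset.card_compl, Finset.card_pair hne12, Fintype.card_fin]
  have hj0mem : j0 ∈ ({p1, p2}ᶜ : Finset (Fin d)) := by
    simp [hj0, hp1, hp2, Fin.ext_iff]
  have hvne := (hind _ hcard).ne_zero i
  have hexx : ∃ x0 : Fin n, a i j0 x0 ≠ 0 := by
    by_contra hcon
    push_neg at hcon
    apply hvne
    funext g
    exact Finset.prod_eq_zero (Finset.mem_univ (⟨j0, hj0mem⟩ :
      {jj // jj ∈ ({p1, p2}ᶜ : Finset (Fin d))})) (hcon _)
  obtain ⟨x0, hx0⟩ := hexx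
  refine ⟨a i j0, fun j => a i j x0 / a i j0 x0, fun j => ?_⟩
  funext y
  simp only [Pi.smul_apply, smul_eq_mul]
  by_cases hjj : j = j0
  · subst hjj
    field_simp
  · have hk := key j j0 hjj x0 y
    rw [div_mul_eq_mul_div, eq_div_iff hx0]
    linear_combination -hk
end

section
/- Let T be a symmetric tensor in Sym^d(V) with d > 2, and let k be an integer with 1 ≤ k ≤ d−1. If rank(T) ≤ f-rank_{[1..k],[k+1..d]}(T) (the rank of T viewed as a matrix via the flattening grouping the first k factors against the last d−k), then every minimal rank decomposition of T into rank-one tensors is symmetric. -/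
/-- Tensor rank of a tensor in coordinates: minimal number of rank-one
(decomposable) tensors summing to `T`. -/
noncomputable def tensorRank {F : Type*} [Field F] {ι : Type*} [Fintype ι]
    {α : ι → Type*} (T : (∀ i, α i) → F) : ℕ :=
  sInf {r | ∃ v : Fin r → ∀ i, α i → F, T = fun m => ∑ s, ∏ i, v s i (m i)}

/-- The flattening of `T` grouping the first `k` factors against the last `d - k`. -/
noncomputable def flattening {n d : ℕ} (k : ℕ) (T : (Fin d → Fin n) → ℂ) :
    Matrix ({j : Fin d // (j : ℕ) < k} → Fin n) ({j : Fin d // ¬ (j : ℕ) < k} → Fin n) ℂ :=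
  fun f g => T (fun j => if h : (j : ℕ) < k then f ⟨j, h⟩ else g ⟨j, h⟩)

open Finset

/-- Cancellation: if `∑ i, w i x * v i y = 0` with `v` linearly independent, then `w = 0`. -/
lemma aux_cancel {r : ℕ} {A B : Type*} (v : Fin r → B → ℂ) (hv : LinearIndependent ℂ v)
    (w : Fin r → A → ℂ) (H : ∀ x y, ∑ i, w i x * v i y = 0) : ∀ i x, w i x = 0 := by
  intro i x
  refine Fintype.linearIndependent_iff.mp hv (fun i => w i x) ?_ i
  funext y
  simpa [Finset.sum_apply] using H x y

/-- If two bilinear expansions with the same independent right factors agree, the left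
factors agree. -/
lemma aux_left_eq {r : ℕ} {A B : Type*} (P P' : A → Fin r → ℂ) (Q : Fin r → B → ℂ)
    (hQ : LinearIndependent ℂ Q)
    (h : ∀ x y, ∑ i, P x i * Q i y = ∑ i, P' x i * Q i y) : ∀ x i, P x i = P' x i := by
  intro x i
  have := aux_cancel Q hQ (fun i x => P x i - P' x i) (fun x y => by
    simp only [sub_mul, Finset.sum_sub_distrib, h x y, sub_self]) i x
  exact sub_eq_zero.mp this

/-- If `r ≤ rank (P * Q)` then the columns of `P` are linearly independent. -/
lemma aux_col_indep {r : ℕ} {A B : Type*} [Fintype A] [Fintype B] [DecidableEq A]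
    (P : Matrix A (Fin r) ℂ) (Q : Matrix (Fin r) B ℂ) (h : r ≤ (P * Q).rank) :
    LinearIndependent ℂ (fun i => P.transpose i) := by
  have h1 : (P * Q).rank ≤ P.rank := Matrix.rank_mul_le_left P Q
  have h2 : P.rank ≤ r := by simpa using Matrix.rank_le_card_width P
  have hPr : P.rank = r := le_antisymm h2 (le_trans h h1)
  rw [linearIndependent_iff_card_eq_finrank_span]
  rw [show Set.finrank ℂ (Set.range P.transpose) = _ from (Matrix.rank_eq_finrank_span_cols P).symm, hPr, Fintype.card_fin]

/-- Proportionality from the cross relation. -/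
lemma aux_prop {n : ℕ} (v w : Fin n → ℂ) (hv : v ≠ 0)
    (hrel : ∀ x y, v x * w y = w x * v y) : ∃ lam : ℂ, w = lam • v := by
  obtain ⟨x0, hx0⟩ := Function.ne_iff.mp hv
  refine ⟨w x0 / v x0, funext fun y => ?_⟩
  have hx0' : v x0 ≠ 0 := hx0
  rw [Pi.smul_apply, smul_eq_mul, div_mul_eq_mul_div, eq_div_iff hx0']
  linear_combination hrel x0 y

/-- Key pointwise extraction: if a product tensor is invariant under swapping two slots,
the two factors satisfy the proportionality relation. -/
lemma aux_swap_rel {J : Type*} [Fintype J] [DecidableEq J] {n : ℕ}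
    (c c' : J → Fin n → ℂ) (hc : ∀ j, c j ≠ 0) (j1 j2 : J) (h12 : j1 ≠ j2)
    (hcc : ∀ j, j ≠ j1 → j ≠ j2 → c' j = c j) (h1 : c' j1 = c j2) (h2 : c' j2 = c j1)
    (H : ∀ f : J → Fin n, ∏ j, c' j (f j) = ∏ j, c j (f j)) :
    ∀ x y, c j1 x * c j2 y = c j2 x * c j1 y := by
  classical
  intro x y
  choose z hz using fun j => Function.ne_iff.mp (hc j)
  set f : J → Fin n := Function.update (Function.update z j1 x) j2 y with hf
  have hfj1 : f j1 = x := by simp [hf, Function.update_apply, h12]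
  have hfj2 : f j2 = y := by simp [hf]
  have hfo : ∀ j, j ≠ j1 → j ≠ j2 → f j = z j := by
    intro j hj1 hj2; simp [hf, Function.update_apply, hj1, hj2]
  set s := (Finset.univ.erase j1).erase j2 with hs
  have hmem : ∀ j ∈ s, j ≠ j1 ∧ j ≠ j2 := by
    intro j hj
    rw [hs, Finset.mem_erase, Finset.mem_erase] at hj
    exact ⟨hj.2.1, hj.1⟩
  have hsplit : ∀ g : J → ℂ, ∏ j, g j = g j1 * (g j2 * ∏ j ∈ s, g j) := by
    intro g
    rw [← Finset.mul_prod_erase Finset.univ g (Finset.mem_univ j1),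
      ← Finset.mul_prod_erase _ g (Finset.mem_erase.mpr ⟨Ne.symm h12, Finset.mem_univ j2⟩)]
  have hC : (∏ j ∈ s, c j (z j)) ≠ 0 := Finset.prod_ne_zero_iff.mpr fun j _ => hz j
  have hHf := H f
  rw [hsplit fun j => c' j (f j), hsplit fun j => c j (f j)] at hHf
  have hrw : ∀ j ∈ s, c' j (f j) = c j (z j) := fun j hj => by
    rw [hcc j (hmem j hj).1 (hmem j hj).2, hfo j (hmem j hj).1 (hmem j hj).2]
  have hrw2 : ∀ j ∈ s, c j (f j) = c j (z j) := fun j hj => by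
    rw [hfo j (hmem j hj).1 (hmem j hj).2]
  rw [Finset.prod_congr rfl hrw, Finset.prod_congr rfl hrw2, h1, h2, hfj1, hfj2] at hHf
  -- hHf : c j2 x * (c j1 y * C) = c j1 x * (c j2 y * C)
  have := mul_right_cancel₀ hC (by linear_combination hHf :
    (c j2 x * c j1 y) * ∏ j ∈ s, c j (z j) = (c j1 x * c j2 y) * ∏ j ∈ s, c j (z j))
  exact this.symm

noncomputable def PM {n d : ℕ} (k r : ℕ) (b : Fin r → Fin d → Fin n → ℂ) :
    Matrix ({j : Fin d // (j : ℕ) < k} → Fin n) (Fin r) ℂ :=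
  fun f i' => ∏ j, b i' j.1 (f j)

noncomputable def QM {n d : ℕ} (k r : ℕ) (b : Fin r → Fin d → Fin n → ℂ) :
    Matrix (Fin r) ({j : Fin d // ¬ (j : ℕ) < k} → Fin n) ℂ :=
  fun i' g => ∏ j, b i' j.1 (g j)

lemma aux_flat {n d k r : ℕ} (T : (Fin d → Fin n) → ℂ) (b : Fin r → Fin d → Fin n → ℂ)
    (hb : T = fun f => ∑ i', ∏ j, b i' j (f j)) :
    flattening k T = PM k r b * QM k r b := by
  ext f g
  rw [Matrix.mul_apply]
  show T _ = _
  rw [hb]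
  refine Finset.sum_congr rfl fun i' _ => ?_
  rw [← Fintype.prod_subtype_mul_prod_subtype (fun j : Fin d => (j : ℕ) < k)
    (fun j => b i' j (if h : (j : ℕ) < k then f ⟨j, h⟩ else g ⟨j, h⟩))]
  show _ = PM k r b f i' * QM k r b i' g
  unfold PM QM
  congr 1
  · exact Finset.prod_congr rfl fun j _ => by rw [dif_pos j.2]
  · exact Finset.prod_congr rfl fun j _ => by rw [dif_neg j.2]

lemma aux_perm {n d r : ℕ} (T : (Fin d → Fin n) → ℂ)
    (hsym : ∀ σ : Equiv.Perm (Fin d), ∀ f : Fin d → Fin n, T (f ∘ σ) = T f)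
    (b : Fin r → Fin d → Fin n → ℂ)
    (hb : T = fun f => ∑ i', ∏ j, b i' j (f j)) (σ : Equiv.Perm (Fin d)) :
    T = fun f => ∑ i', ∏ j, b i' (σ j) (f j) := by
  funext f
  rw [← hsym σ⁻¹ f, hb]
  refine Finset.sum_congr rfl fun i' _ => ?_
  rw [← Equiv.prod_comp σ (fun j => b i' j ((f ∘ ⇑σ⁻¹) j))]
  exact Finset.prod_congr rfl fun j _ => by simp

lemma aux_colP {n d k r : ℕ} (T : (Fin d → Fin n) → ℂ)
    (hrk : r ≤ (flattening k T).rank) (b : Fin r → Fin d → Fin n → ℂ)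
    (hb : T = fun f => ∑ i', ∏ j, b i' j (f j)) :
    LinearIndependent ℂ (fun i' => (PM k r b).transpose i') := by
  exact aux_col_indep _ _ (by rw [← aux_flat T b hb]; exact hrk)

lemma aux_rowQ {n d k r : ℕ} (T : (Fin d → Fin n) → ℂ)
    (hrk : r ≤ (flattening k T).rank) (b : Fin r → Fin d → Fin n → ℂ)
    (hb : T = fun f => ∑ i', ∏ j, b i' j (f j)) :
    LinearIndependent ℂ (fun i' => QM k r b i') := by
  have h : r ≤ ((QM k r b).transpose * (PM k r b).transpose).rank := by
    rw [← Matrix.transpose_mul, Matrix.rank_transpose, ← aux_flat T b hb]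
    exact hrk
  exact aux_col_indep _ _ h

lemma aux_nz {n d k r : ℕ} (T : (Fin d → Fin n) → ℂ)
    (hrk : r ≤ (flattening k T).rank) (b : Fin r → Fin d → Fin n → ℂ)
    (hb : T = fun f => ∑ i', ∏ j, b i' j (f j)) :
    ∀ (i' : Fin r) (j : Fin d), b i' j ≠ 0 := by
  intro i' j h0
  by_cases hj : (j : ℕ) < k
  · refine (aux_colP T hrk b hb).ne_zero i' ?_
    funext f
    refine Finset.prod_eq_zero (Finset.mem_univ (⟨j, hj⟩ : {j : Fin d // (j : ℕ) < k})) ?_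
    rw [h0]; rfl
  · refine (aux_rowQ T hrk b hb).ne_zero i' ?_
    funext g
    refine Finset.prod_eq_zero (Finset.mem_univ (⟨j, hj⟩ : {j : Fin d // ¬ (j : ℕ) < k})) ?_
    rw [h0]; rfl

lemma aux_side {n d k r : ℕ} (T : (Fin d → Fin n) → ℂ)
    (hsym : ∀ σ : Equiv.Perm (Fin d), ∀ f : Fin d → Fin n, T (f ∘ σ) = T f)
    (hrk : r ≤ (flattening k T).rank) (b : Fin r → Fin d → Fin n → ℂ)
    (hb : T = fun f => ∑ i', ∏ j, b i' j (f j)) (i : Fin r) (j1 j2 : Fin d) (h12 : j1 ≠ j2)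
    (hss : ((j1 : ℕ) < k ∧ (j2 : ℕ) < k) ∨ (¬ (j1 : ℕ) < k ∧ ¬ (j2 : ℕ) < k)) :
    ∀ x y, b i j1 x * b i j2 y = b i j2 x * b i j1 y := by
  classical
  set σ : Equiv.Perm (Fin d) := Equiv.swap j1 j2 with hσ
  set b' : Fin r → Fin d → Fin n → ℂ := fun i' j => b i' (σ j) with hb'def
  have hb' : T = fun f => ∑ i', ∏ j, b' i' j (f j) := aux_perm T hsym b hb σ
  have hMeq : PM k r b * QM k r b = PM k r b' * QM k r b' :=
    (aux_flat T b hb).symm.trans (aux_flat T b' hb')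
  rcases hss with ⟨h1, h2⟩ | ⟨h1, h2⟩
  · -- both on the left: Q is unchanged
    have hQeq : QM k r b' = QM k r b := by
      funext i' g
      refine Finset.prod_congr rfl fun j _ => ?_
      have hn1 : j.1 ≠ j1 := fun h => j.2 (by rw [h]; exact h1)
      have hn2 : j.1 ≠ j2 := fun h => j.2 (by rw [h]; exact h2)
      show b i' (σ j.1) _ = _
      rw [hσ, Equiv.swap_apply_of_ne_of_ne hn1 hn2]
    rw [hQeq] at hMeq
    have hQind := aux_rowQ T hrk b hb
    have hPeq : ∀ f i', PM k r b' f i' = PM k r b f i' := by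
      refine aux_left_eq (PM k r b') (PM k r b) (fun i' => QM k r b i') hQind fun f g => ?_
      have := congrFun (congrFun hMeq f) g
      rw [Matrix.mul_apply, Matrix.mul_apply] at this
      exact this.symm
    have hres := aux_swap_rel (J := {j : Fin d // (j : ℕ) < k})
      (fun j => b i j.1) (fun j => b i (σ j.1)) (fun j => aux_nz T hrk b hb i j.1)
      ⟨j1, h1⟩ ⟨j2, h2⟩ (fun h => h12 (congrArg Subtype.val h))
      (fun j hj1 hj2 => by
        have hn1 : j.1 ≠ j1 := fun h => hj1 (Subtype.ext h)
        have hn2 : j.1 ≠ j2 := fun h => hj2 (Subtype.ext h)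
        show b i (σ j.1) = b i j.1
        rw [hσ, Equiv.swap_apply_of_ne_of_ne hn1 hn2])
      (by rw [hσ]; simp) (by rw [hσ]; simp)
      (fun f => hPeq f i)
    exact hres
  · -- both on the right: P is unchanged
    have hPeq : PM k r b' = PM k r b := by
      funext f i'
      refine Finset.prod_congr rfl fun j _ => ?_
      have hn1 : j.1 ≠ j1 := fun h => h1 (h ▸ j.2)
      have hn2 : j.1 ≠ j2 := fun h => h2 (h ▸ j.2)
      show b i' (σ j.1) _ = _
      rw [hσ, Equiv.swap_apply_of_ne_of_ne hn1 hn2]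
    rw [hPeq] at hMeq
    have hPind := aux_colP T hrk b hb
    have hQeq : ∀ g i', QM k r b' i' g = QM k r b i' g := by
      intro g i'
      refine aux_left_eq (fun g i' => QM k r b' i' g) (fun g i' => QM k r b i' g)
        (fun i' f => (PM k r b).transpose i' f) hPind (fun g f => ?_) g i'
      have := congrFun (congrFun hMeq f) g
      rw [Matrix.mul_apply, Matrix.mul_apply] at this
      simp only [Matrix.transpose_apply]
      calc ∑ i', QM k r b' i' g * PM k r b f i'
          = ∑ i', PM k r b f i' * QM k r b' i' g := by
            exact Finset.sum_congr rfl fun _ _ => mul_comm _ _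
        _ = ∑ i', PM k r b f i' * QM k r b i' g := this.symm
        _ = ∑ i', QM k r b i' g * PM k r b f i' := by
            exact Finset.sum_congr rfl fun _ _ => mul_comm _ _
    have hres := aux_swap_rel (J := {j : Fin d // ¬ (j : ℕ) < k})
      (fun j => b i j.1) (fun j => b i (σ j.1)) (fun j => aux_nz T hrk b hb i j.1)
      ⟨j1, h1⟩ ⟨j2, h2⟩ (fun h => h12 (congrArg Subtype.val h))
      (fun j hj1 hj2 => by
        have hn1 : j.1 ≠ j1 := fun h => hj1 (Subtype.ext h)
        have hn2 : j.1 ≠ j2 := fun h => hj2 (Subtype.ext h)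
        show b i (σ j.1) = b i j.1
        rw [hσ, Equiv.swap_apply_of_ne_of_ne hn1 hn2])
      (by rw [hσ]; simp) (by rw [hσ]; simp)
      (fun g => hQeq g i)
    exact hres
/-- Gross's lemma, first assertion: if `rank T` is at most the
flattening rank for some `1 ≤ k ≤ d - 1`, then every minimal decomposition of
the symmetric tensor `T` is symmetric. -/
theorem rank_le_flattening_rank_imp_minimal_decomposition_symmetric
    {n d k : ℕ} (hd : 2 < d) (hk1 : 1 ≤ k) (hk2 : k ≤ d - 1)
    (T : (Fin d → Fin n) → ℂ)
    (hsym : ∀ σ : Equiv.Perm (Fin d), ∀ f : Fin d → Fin n, T (f ∘ σ) = T f)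
    (hrank : tensorRank T ≤ (flattening k T).rank) :
    ∀ (r : ℕ) (a : Fin r → Fin d → (Fin n → ℂ)),
      r = tensorRank T →
      T = (fun f => ∑ i, ∏ j, a i j (f j)) →
      ∀ i : Fin r, ∃ (v : Fin n → ℂ) (c : Fin d → ℂ), ∀ j, a i j = c j • v := by
  intro r a hr hT i
  classical
  have hkd : k < d := by omega
  have hrk : r ≤ (flattening k T).rank := by rw [hr]; exact hrank
  have hnz := aux_nz T hrk a hT
  set j₀ : Fin d := ⟨0, by omega⟩ with hj₀
  have h0k : (j₀ : ℕ) < k := by rw [hj₀]; exact hk1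
  set v := a i j₀ with hvdef
  have hvne : v ≠ 0 := hnz i j₀
  have hall : ∀ j : Fin d, ∃ lam : ℂ, a i j = lam • v := by
    intro j
    by_cases hjk : (j : ℕ) < k
    · by_cases hjj : j = j₀
      · exact ⟨1, by rw [hjj, one_smul]⟩
      · exact aux_prop v (a i j) hvne
          (aux_side T hsym hrk a hT i j₀ j (fun h => hjj h.symm) (Or.inl ⟨h0k, hjk⟩))
    · have hj0 : j ≠ j₀ := fun h => hjk (by rw [h]; exact h0k)
      have key : ∀ m : Fin d, ¬ (m : ℕ) < k → m ≠ j → ∃ lam : ℂ, a i j = lam • v := by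
        intro m hmR hmj
        have hmj₀ : m ≠ j₀ := fun h => hmR (by rw [h]; exact h0k)
        set σ : Equiv.Perm (Fin d) := Equiv.swap j₀ m with hσdef
        set b : Fin r → Fin d → Fin n → ℂ := fun i' j' => a i' (σ j') with hbdef
        have hb : T = fun f => ∑ i', ∏ j', b i' j' (f j') := aux_perm T hsym a hT σ
        have hσj : σ j = j :=
          Equiv.swap_apply_of_ne_of_ne hj0 (fun h => hmj h.symm)
        have hσm : σ m = j₀ := Equiv.swap_apply_right j₀ m
        have hrel := aux_side T hsym hrk b hb i j m (fun h => hmj h.symm)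
          (Or.inr ⟨hjk, hmR⟩)
        refine aux_prop v (a i j) hvne fun x y => ?_
        have h := hrel y x
        simp only [hbdef] at h
        rw [hσj, hσm] at h
        rw [hvdef]
        linear_combination h
      by_cases hm : k + 1 < d
      · by_cases hjK : j = (⟨k, hkd⟩ : Fin d)
        · refine key ⟨k + 1, hm⟩ (show ¬ k + 1 < k by omega) ?_
          have hjv : (j : ℕ) = k := by rw [hjK]
          exact Fin.ne_of_val_ne (show k + 1 ≠ (j : ℕ) by omega)
        · refine key ⟨k, hkd⟩ (show ¬ k < k by omega) (fun h => hjK h.symm)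
      · have hjlt := j.isLt
        have hjval : (j : ℕ) = k := by omega
        have h1k : (1 : ℕ) < k := by omega
        set m : Fin d := ⟨1, by omega⟩ with hmdef
        have hjm : j ≠ m := Fin.ne_of_val_ne (show (j : ℕ) ≠ 1 by omega)
        have hj₀m : j₀ ≠ m := Fin.ne_of_val_ne (show (0 : ℕ) ≠ 1 by omega)
        set σ : Equiv.Perm (Fin d) := Equiv.swap j m with hσdef
        set b : Fin r → Fin d → Fin n → ℂ := fun i' j' => a i' (σ j') with hbdef
        have hb : T = fun f => ∑ i', ∏ j', b i' j' (f j') := aux_perm T hsym a hT σ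
        have hσj₀ : σ j₀ = j₀ :=
          Equiv.swap_apply_of_ne_of_ne (fun h => hj0 h.symm) hj₀m
        have hσm : σ m = j := Equiv.swap_apply_right j m
        have hrel := aux_side T hsym hrk b hb i j₀ m hj₀m
          (Or.inl ⟨h0k, show (m : ℕ) < k from h1k⟩)
        refine aux_prop v (a i j) hvne fun x y => ?_
        have h := hrel x y
        simp only [hbdef] at h
        rw [hσj₀, hσm] at h
        rw [hvdef]
        linear_combination h
  choose c hc using hall
  exact ⟨v, c, hc⟩
end

section
/- Failure of MinRank multiplicativity over ℝ: with M = [[0,1],[−1,0]] and X = span{M, I_2} ⊂ Mat_{2×2}(ℝ), the subspace Y = X ⊗ X ⊂ Mat_{4×4}(ℝ) (spanned by the Kronecker products of elements of X) satisfies MinRank(Y) ≤ 2 < 4 = (MinRank(X))^2. -/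
open Kronecker Matrix

/-- Minimal rank of the nonzero elements of a linear subspace of matrices. -/
noncomputable def minRank {F : Type*} [Field F] {m n : Type*} [Fintype m] [Fintype n]
    [DecidableEq m] [DecidableEq n] (S : Submodule F (Matrix m n F)) : ℕ :=
  sInf {r | ∃ A ∈ S, A ≠ 0 ∧ A.rank = r}

section aux

local notation "M" => (!![0, 1; -1, 0] : Matrix (Fin 2) (Fin 2) ℝ)

lemma aux_minRankX :
    minRank (Submodule.span ℝ {M, 1}) = 2 := by
  have h2mem : (2 : ℕ) ∈ {r | ∃ A ∈ Submodule.span ℝ ({M, 1} : Set (Matrix (Fin 2) (Fin 2) ℝ)),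
      A ≠ 0 ∧ A.rank = r} := by
    refine ⟨1, Submodule.subset_span (by simp), ?_, ?_⟩
    · exact one_ne_zero
    · simp [Matrix.rank_one]
  have hall : ∀ r ∈ {r | ∃ A ∈ Submodule.span ℝ ({M, 1} : Set (Matrix (Fin 2) (Fin 2) ℝ)),
      A ≠ 0 ∧ A.rank = r}, r = 2 := by
    rintro r ⟨A, hAX, hA0, rfl⟩
    obtain ⟨c, d, hcd⟩ := Submodule.mem_span_pair.mp hAX
    have hdet : A.det = c ^ 2 + d ^ 2 := by
      rw [Matrix.det_fin_two]
      have h00 : A 0 0 = d := by rw [← hcd]; simp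
      have h01 : A 0 1 = c := by rw [← hcd]; simp
      have h10 : A 1 0 = -c := by rw [← hcd]; simp
      have h11 : A 1 1 = d := by rw [← hcd]; simp
      rw [h00, h01, h10, h11]; ring
    have hdet0 : A.det ≠ 0 := by
      rw [hdet]
      intro h
      have hc : c = 0 := by nlinarith [sq_nonneg c, sq_nonneg d]
      have hd : d = 0 := by nlinarith [sq_nonneg c, sq_nonneg d]
      apply hA0
      rw [← hcd, hc, hd]; simp
    have : A.rank = Fintype.card (Fin 2) :=
      Matrix.rank_of_isUnit _ ((Matrix.isUnit_iff_isUnit_det A).mpr (isUnit_iff_ne_zero.mpr hdet0))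
    simpa using this
  unfold minRank
  exact le_antisymm (Nat.sInf_le h2mem) (by
    have := Nat.sInf_mem ⟨2, h2mem⟩
    rw [hall _ this])

lemma aux_minRankY :
    minRank (Submodule.span ℝ
      {C | ∃ A ∈ Submodule.span ℝ ({M, 1} : Set (Matrix (Fin 2) (Fin 2) ℝ)),
        ∃ B ∈ Submodule.span ℝ ({M, 1} : Set (Matrix (Fin 2) (Fin 2) ℝ)), C = A ⊗ₖ B}) ≤ 2 := by
  set A : Matrix (Fin 2 × Fin 2) (Fin 2 × Fin 2) ℝ := 1 + M ⊗ₖ M with hA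
  have hMX : M ∈ Submodule.span ℝ ({M, 1} : Set (Matrix (Fin 2) (Fin 2) ℝ)) :=
    Submodule.subset_span (by simp)
  have h1X : (1 : Matrix (Fin 2) (Fin 2) ℝ) ∈ Submodule.span ℝ
      ({M, 1} : Set (Matrix (Fin 2) (Fin 2) ℝ)) := Submodule.subset_span (by simp)
  have hAY : A ∈ Submodule.span ℝ
      {C | ∃ A ∈ Submodule.span ℝ ({M, 1} : Set (Matrix (Fin 2) (Fin 2) ℝ)),
        ∃ B ∈ Submodule.span ℝ ({M, 1} : Set (Matrix (Fin 2) (Fin 2) ℝ)), C = A ⊗ₖ B} := by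
    refine Submodule.add_mem _ (Submodule.subset_span ?_) (Submodule.subset_span ?_)
    · exact ⟨1, h1X, 1, h1X, (Matrix.one_kronecker_one).symm⟩
    · exact ⟨M, hMX, M, hMX, rfl⟩
  have hA0 : A ≠ 0 := by
    intro h
    have : A (0, 0) (0, 0) = 0 := by rw [h]; rfl
    rw [hA] at this
    simp [Matrix.one_apply, Matrix.kroneckerMap_apply] at this
  -- rank bound: A = B * C with inner dimension 2
  set B : Matrix (Fin 2 × Fin 2) (Fin 2) ℝ := Matrix.of fun p m => A p (0, m) with hB
  set C : Matrix (Fin 2) (Fin 2 × Fin 2) ℝ := Matrix.of fun m q => A (0, m) q with hC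
  have hfact : A = B * C := by
    ext ⟨i, j⟩ ⟨k, l⟩
    fin_cases i <;> fin_cases j <;> fin_cases k <;> fin_cases l <;>
      simp [hB, hC, hA, Matrix.mul_apply, Fin.sum_univ_two, Matrix.kroneckerMap_apply,
        Matrix.one_apply, Prod.ext_iff]
  have hrank : A.rank ≤ 2 := by
    calc A.rank = (B * C).rank := by rw [hfact]
    _ ≤ B.rank := Matrix.rank_mul_le_left B C
    _ ≤ Fintype.card (Fin 2) := Matrix.rank_le_card_width B
    _ = 2 := by simp
  unfold minRank
  exact le_trans (Nat.sInf_le ⟨A, hAY, hA0, rfl⟩) hrank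

end aux

/-- failure of MinRank multiplicativity over ℝ:
with `M = [[0,1],[-1,0]]`, `X = span{M, I₂}`, and `Y = X ⊗ X` (the span of
Kronecker products), one has `MinRank(Y) ≤ 2 < 4 = (MinRank X)²`. -/
theorem minRank_not_multiplicative :
    let M : Matrix (Fin 2) (Fin 2) ℝ := !![0, 1; -1, 0]
    let X : Submodule ℝ (Matrix (Fin 2) (Fin 2) ℝ) := Submodule.span ℝ {M, 1}
    let Y : Submodule ℝ (Matrix (Fin 2 × Fin 2) (Fin 2 × Fin 2) ℝ) :=
      Submodule.span ℝ {C | ∃ A ∈ X, ∃ B ∈ X, C = A ⊗ₖ B}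
    minRank Y ≤ 2 ∧ minRank X = 2 ∧ minRank Y < (minRank X) ^ 2 ∧ (minRank X) ^ 2 = 4 := by
  intro M X Y
  have hX : minRank X = 2 := aux_minRankX
  have hY : minRank Y ≤ 2 := aux_minRankY
  refine ⟨hY, hX, ?_, ?_⟩
  · rw [hX]; omega
  · rw [hX]; norm_num
end

section
/- Arbitrarily large MinRank decrement: let M = [[0,1],[−1,0]], let X = span{M, I_2}, and for n ≥ 1 set S_{2n} = span{M ⊗ I_n, I_{2n}} ⊂ Mat_{2n×2n}(ℝ). Then MinRank(S_{2n}) = 2n, while rank((M ⊗ I_n) ⊗ (M ⊗ I_n) − I_{4n^2}) = 2n^2, so (MinRank(S_{2n}))^2 − MinRank(S_{2n} ⊗ S_{2n}) ≥ 4n^2 − 2n^2 = 2n^2, which is unbounded in n. -/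
open Kronecker Matrix

section Aux

variable {l m n p : Type*} [Fintype m] [Fintype n] [DecidableEq m] [DecidableEq n]

lemma negKron (A : Matrix l m ℝ) (B : Matrix n p ℝ) : (-A) ⊗ₖ B = -(A ⊗ₖ B) := by
  rw [← neg_one_smul ℝ A, smul_kronecker, neg_one_smul]

lemma kronNeg (A : Matrix l m ℝ) (B : Matrix n p ℝ) : A ⊗ₖ (-B) = -(A ⊗ₖ B) := by
  rw [← neg_one_smul ℝ B, kronecker_smul, neg_one_smul]

lemma matRank_add_le (A B : Matrix m m ℝ) : (A + B).rank ≤ A.rank + B.rank := by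
  have h : LinearMap.range (A + B).mulVecLin ≤
      LinearMap.range A.mulVecLin ⊔ LinearMap.range B.mulVecLin := by
    rintro x ⟨y, rfl⟩
    rw [mulVecLin_add, LinearMap.add_apply]
    exact Submodule.add_mem_sup (LinearMap.mem_range_self _ y) (LinearMap.mem_range_self _ y)
  exact le_trans (Submodule.finrank_mono h)
    (Submodule.finrank_add_le_finrank_add_finrank _ _)

lemma matRank_neg (A : Matrix m m ℝ) : (-A).rank = A.rank := by
  have h1 : (-A) = (-1 : Matrix m m ℝ) * A := by rw [neg_one_mul]
  have hu : IsUnit ((-1 : Matrix m m ℝ)).det :=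
    isUnit_det_of_right_inverse (B := -1) (by rw [neg_one_mul, neg_neg])
  rw [h1, rank_mul_eq_right_of_isUnit_det _ _ hu]

end Aux

/-- Gurvits: arbitrarily large MinRank decrement.  With
`S₂ₙ = span{M ⊗ Iₙ, I₂ₙ}` one has `MinRank(S₂ₙ) = 2n`,
`rank((M ⊗ Iₙ) ⊗ (M ⊗ Iₙ) - I) = 2n²`, and
`(MinRank S₂ₙ)² - MinRank(S₂ₙ ⊗ S₂ₙ) ≥ 2n²`. -/
theorem minRank_decrement_unbounded (n : ℕ) (hn : 1 ≤ n) :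
    let M : Matrix (Fin 2) (Fin 2) ℝ := !![0, 1; -1, 0]
    let N : Matrix (Fin 2 × Fin n) (Fin 2 × Fin n) ℝ := M ⊗ₖ (1 : Matrix (Fin n) (Fin n) ℝ)
    let S : Submodule ℝ (Matrix (Fin 2 × Fin n) (Fin 2 × Fin n) ℝ) := Submodule.span ℝ {N, 1}
    let SS : Submodule ℝ (Matrix ((Fin 2 × Fin n) × (Fin 2 × Fin n))
        ((Fin 2 × Fin n) × (Fin 2 × Fin n)) ℝ) :=
      Submodule.span ℝ {C | ∃ A ∈ S, ∃ B ∈ S, C = A ⊗ₖ B}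
    minRank S = 2 * n ∧
    (N ⊗ₖ N - 1).rank = 2 * n ^ 2 ∧
    minRank SS ≤ 2 * n ^ 2 ∧
    2 * n ^ 2 ≤ (minRank S) ^ 2 - minRank SS := by
  intro M N S SS
  have hM2 : M * M = -1 := by
    show (!![0, 1; -1, 0] : Matrix (Fin 2) (Fin 2) ℝ) * !![0, 1; -1, 0] = -1
    ext i j
    fin_cases i <;> fin_cases j <;>
      simp [Matrix.mul_apply, Fin.sum_univ_two, Matrix.one_apply]
  have hN2 : N * N = -1 := by
    show (M ⊗ₖ 1) * (M ⊗ₖ 1) = -1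
    rw [← mul_kronecker_mul, hM2, one_mul, negKron, one_kronecker_one]
  -- the big matrix A = N ⊗ N
  set A : Matrix ((Fin 2 × Fin n) × (Fin 2 × Fin n)) ((Fin 2 × Fin n) × (Fin 2 × Fin n)) ℝ :=
    N ⊗ₖ N with hA
  have hA2 : A * A = 1 := by
    rw [hA, ← mul_kronecker_mul, hN2, negKron, kronNeg, neg_neg, one_kronecker_one]
  have hcard : Fintype.card ((Fin 2 × Fin n) × (Fin 2 × Fin n)) = 4 * n ^ 2 := by
    simp [Fintype.card_prod]; ring
  -- (A - 1)(A + 1) = 0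
  have hmul0 : (A - 1) * (A + 1) = 0 := by
    have : (A - 1) * (A + 1) = A * A - 1 := by noncomm_ring
    rw [this, hA2, sub_self]
  have hle : (A - 1).rank + (A + 1).rank ≤ 4 * n ^ 2 := by
    rw [← hcard]; exact rank_add_rank_le_card_of_mul_eq_zero hmul0
  -- lower bound via (A+1) + (1-A) = 2
  have htwo : ((1 : Matrix ((Fin 2 × Fin n) × (Fin 2 × Fin n)) ((Fin 2 × Fin n) × (Fin 2 × Fin n)) ℝ) + 1).rank = 4 * n ^ 2 := by
    have hu : ((1 : Matrix ((Fin 2 × Fin n) × (Fin 2 × Fin n)) ((Fin 2 × Fin n) × (Fin 2 × Fin n)) ℝ) + 1) *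
        ((2⁻¹ : ℝ) • 1) = 1 := by
      rw [mul_smul_comm, mul_one, ← two_smul ℝ (1 : Matrix _ _ ℝ), smul_smul]
      norm_num
    rw [rank_of_isUnit _ ((isUnit_iff_isUnit_det _).mpr (isUnit_det_of_right_inverse hu)), hcard]
  have hge : 4 * n ^ 2 ≤ (A - 1).rank + (A + 1).rank := by
    have hsum : (A + 1) + (1 - A) = (1 : Matrix _ _ ℝ) + 1 := by abel
    have h1 : (1 - A) = -(A - 1) := by abel
    calc 4 * n ^ 2 = ((A + 1) + (1 - A)).rank := by rw [hsum, htwo]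
      _ ≤ (A + 1).rank + (1 - A).rank := matRank_add_le _ _
      _ = (A - 1).rank + (A + 1).rank := by rw [h1, matRank_neg]; omega
  -- symmetry: rank (A - 1) = rank (A + 1) via conjugation
  have hEq : (A - 1).rank = (A + 1).rank := by
    set D : Matrix (Fin 2) (Fin 2) ℝ := !![1, 0; 0, -1] with hD
    have hDM : D * M = -(M * D) := by
      show (!![1, 0; 0, -1] : Matrix (Fin 2) (Fin 2) ℝ) * !![0, 1; -1, 0] =
        -(!![0, 1; -1, 0] * !![1, 0; 0, -1])
      ext i j
      fin_cases i <;> fin_cases j <;> simp [Matrix.mul_apply, Fin.sum_univ_two]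
    have hDD : D * D = 1 := by
      show (!![1, 0; 0, -1] : Matrix (Fin 2) (Fin 2) ℝ) * !![1, 0; 0, -1] = 1
      ext i j
      fin_cases i <;> fin_cases j <;>
        simp [Matrix.mul_apply, Fin.sum_univ_two, Matrix.one_apply]
    set Q : Matrix ((Fin 2 × Fin n) × (Fin 2 × Fin n)) ((Fin 2 × Fin n) × (Fin 2 × Fin n)) ℝ :=
      (D ⊗ₖ (1 : Matrix (Fin n) (Fin n) ℝ)) ⊗ₖ (1 : Matrix (Fin 2 × Fin n) (Fin 2 × Fin n) ℝ)
      with hQ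
    have hQQ : Q * Q = 1 := by
      have h1 : Q * Q = ((D ⊗ₖ (1 : Matrix (Fin n) (Fin n) ℝ)) *
          (D ⊗ₖ (1 : Matrix (Fin n) (Fin n) ℝ))) ⊗ₖ
          ((1 : Matrix (Fin 2 × Fin n) (Fin 2 × Fin n) ℝ) * 1) :=
        (mul_kronecker_mul _ _ _ _).symm
      have h2 : (D ⊗ₖ (1 : Matrix (Fin n) (Fin n) ℝ)) * (D ⊗ₖ (1 : Matrix (Fin n) (Fin n) ℝ))
          = (D * D) ⊗ₖ ((1 : Matrix (Fin n) (Fin n) ℝ) * 1) := (mul_kronecker_mul _ _ _ _).symm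
      rw [h1, h2, hDD, one_mul, one_mul, one_kronecker_one, one_kronecker_one]
    have hQdet : IsUnit Q.det := isUnit_det_of_right_inverse hQQ
    have hDN : (D ⊗ₖ (1 : Matrix (Fin n) (Fin n) ℝ)) * N
        = -(N * (D ⊗ₖ (1 : Matrix (Fin n) (Fin n) ℝ))) := by
      have e1 : (D ⊗ₖ (1 : Matrix (Fin n) (Fin n) ℝ)) * N
          = (D * M) ⊗ₖ ((1 : Matrix (Fin n) (Fin n) ℝ) * 1) := (mul_kronecker_mul _ _ _ _).symm
      have e2 : N * (D ⊗ₖ (1 : Matrix (Fin n) (Fin n) ℝ))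
          = (M * D) ⊗ₖ ((1 : Matrix (Fin n) (Fin n) ℝ) * 1) := (mul_kronecker_mul _ _ _ _).symm
      rw [e1, e2, hDM, negKron]
    have hQA : Q * A = -(A * Q) := by
      have h1 : Q * A = ((D ⊗ₖ (1 : Matrix (Fin n) (Fin n) ℝ)) * N) ⊗ₖ
          ((1 : Matrix (Fin 2 × Fin n) (Fin 2 × Fin n) ℝ) * N) := (mul_kronecker_mul _ _ _ _).symm
      have h2 : A * Q = (N * (D ⊗ₖ (1 : Matrix (Fin n) (Fin n) ℝ))) ⊗ₖ
          (N * (1 : Matrix (Fin 2 × Fin n) (Fin 2 × Fin n) ℝ)) := (mul_kronecker_mul _ _ _ _).symm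
      rw [h1, h2, one_mul, mul_one, hDN, negKron]
    have hkey : Q * (A - 1) = -((A + 1) * Q) := by
      rw [mul_sub, hQA, mul_one, add_mul, one_mul, neg_add]
      abel
    calc (A - 1).rank = (Q * (A - 1)).rank :=
          (rank_mul_eq_right_of_isUnit_det Q (A - 1) hQdet).symm
      _ = (-((A + 1) * Q)).rank := by rw [hkey]
      _ = ((A + 1) * Q).rank := matRank_neg _
      _ = (A + 1).rank := rank_mul_eq_left_of_isUnit_det Q (A + 1) hQdet
  have part2 : (A - 1).rank = 2 * n ^ 2 := by omega
  -- Part 1 : minRank S = 2 * n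
  have hNunit : N * (-N) = 1 := by rw [mul_neg, hN2, neg_neg]
  have hNisU : IsUnit N := (isUnit_iff_isUnit_det N).mpr (isUnit_det_of_right_inverse hNunit)
  have hNrank : N.rank = 2 * n := by
    rw [rank_of_isUnit N hNisU, Fintype.card_prod, Fintype.card_fin, Fintype.card_fin]
  have hNmem : N ∈ S := Submodule.subset_span (Set.mem_insert _ _)
  have hNne : N ≠ 0 := by
    intro h
    rw [h, mul_zero] at hN2
    have h0 := congrFun (congrFun hN2 ((0 : Fin 2), (⟨0, hn⟩ : Fin n)))
      ((0 : Fin 2), (⟨0, hn⟩ : Fin n))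
    simp [Matrix.one_apply] at h0
  have hT : {r | ∃ B ∈ S, B ≠ 0 ∧ B.rank = r} = {2 * n} := by
    ext r
    constructor
    · rintro ⟨B, hBS, hBne, rfl⟩
      obtain ⟨a, b, rfl⟩ := Submodule.mem_span_pair.mp hBS
      have habne : a ≠ 0 ∨ b ≠ 0 := by
        by_contra h
        push_neg at h
        exact hBne (by rw [h.1, h.2, zero_smul, zero_smul, add_zero])
      have hpos : (0 : ℝ) < a ^ 2 + b ^ 2 := by
        rcases habne with h | h
        · positivity
        · positivity
      have hexp : (a • N + b • (1 : Matrix _ _ ℝ)) * (b • (1 : Matrix _ _ ℝ) - a • N)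
          = (a ^ 2 + b ^ 2) • 1 := by
        rw [add_mul, mul_sub, mul_sub, smul_mul_smul_comm, smul_mul_smul_comm,
          smul_mul_smul_comm, smul_mul_smul_comm, hN2]
        simp only [one_mul, mul_one]
        module
      have hinv : (a • N + b • (1 : Matrix _ _ ℝ)) *
          (((a ^ 2 + b ^ 2)⁻¹ : ℝ) • (b • (1 : Matrix _ _ ℝ) - a • N)) = 1 := by
        rw [mul_smul_comm, hexp, smul_smul, inv_mul_cancel₀ hpos.ne', one_smul]
      have : IsUnit (a • N + b • (1 : Matrix _ _ ℝ)) :=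
        (isUnit_iff_isUnit_det _).mpr (isUnit_det_of_right_inverse hinv)
      rw [Set.mem_singleton_iff, rank_of_isUnit _ this, Fintype.card_prod,
        Fintype.card_fin, Fintype.card_fin]
    · rintro rfl
      exact ⟨N, hNmem, hNne, hNrank⟩
  have part1 : minRank S = 2 * n := by
    rw [minRank, hT, csInf_singleton]
  -- Part 3 : minRank SS ≤ 2 n²
  have h1S : (1 : Matrix (Fin 2 × Fin n) (Fin 2 × Fin n) ℝ) ∈ S :=
    Submodule.subset_span (Set.mem_insert_of_mem _ rfl)
  have hAmem : A ∈ SS := Submodule.subset_span ⟨N, hNmem, N, hNmem, rfl⟩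
  have h1SS : (1 : Matrix ((Fin 2 × Fin n) × (Fin 2 × Fin n)) ((Fin 2 × Fin n) × (Fin 2 × Fin n)) ℝ) ∈ SS :=
    Submodule.subset_span ⟨1, h1S, 1, h1S, one_kronecker_one.symm⟩
  have hsubmem : A - 1 ∈ SS := sub_mem hAmem h1SS
  have hsubne : A - 1 ≠ 0 := by
    intro h
    rw [h, Matrix.rank_zero] at part2
    exact (Nat.mul_ne_zero two_ne_zero (pow_ne_zero 2 (by omega))) part2.symm
  have part3 : minRank SS ≤ 2 * n ^ 2 := Nat.sInf_le ⟨A - 1, hsubmem, hsubne, part2⟩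
  refine ⟨part1, part2, part3, ?_⟩
  rw [part1]
  have h4 : (2 * n) ^ 2 = 4 * n ^ 2 := by ring
  rw [h4]
  generalize hk : n ^ 2 = k at part3 ⊢
  omega
end
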